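/- arXiv:2311.03743 — 5 statements merged into one kernel-verified Lean document; each statement's English description precedes it below -/
import Mathlib

section
/- Let Λ₀, …, Λ_N ∈ ℂ* with Λ_j + Λ_j⁻¹ ≠ 0 for all j, define J_j = ((Λ_j+Λ_j⁻¹)/2) · [[i, -(Λ_j-Λ_j⁻¹)²/(Λ_j+Λ_j⁻¹)²], [1, i]], and let b_j ∈ ℂ, B_j = [[1, b_j], [0, -1]]. Then the ordered product J₀B₀ · J₁B₁ ⋯ J_N B_N equals -Id if and only if the ordered product J₀⁻¹B₀ · J₁⁻¹B₁ ⋯ J_N⁻¹B_N equals -Id. -/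
set_option maxHeartbeats 1000000


private lemma Jmul (L : ℂ) (h0 : L ≠ 0) (h : L + L⁻¹ ≠ 0) :
    ((L + L⁻¹)/2 : ℂ) • !![Complex.I, -((L - L⁻¹)^2 / (L + L⁻¹)^2); 1, Complex.I] *
    (((L + L⁻¹)/2 : ℂ) • !![-Complex.I, -((L - L⁻¹)^2 / (L + L⁻¹)^2); 1, -Complex.I]) = 1 := by
  have h1 : L^2 + 1 ≠ 0 := by
    have := mul_ne_zero h0 h
    rwa [mul_add, mul_inv_cancel₀ h0, ← sq] at this
  have hD : (L^2*4 + L^4*8 + L^6*4 : ℂ) ≠ 0 := by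
    have := mul_ne_zero (mul_ne_zero (pow_ne_zero 2 h0) (pow_ne_zero 2 h1)) (by norm_num : (4:ℂ) ≠ 0)
    intro hc; apply this; linear_combination hc
  ext i k
  fin_cases i <;> fin_cases k <;>
    simp [Matrix.mul_apply, Fin.sum_univ_two, Matrix.one_apply] <;>
    field_simp [h0, h] <;> ring_nf <;> simp [Complex.I_sq] <;> ring_nf <;>
    field_simp [hD] <;> ring

private lemma conj_ofFn {M : Type*} [Monoid M] : ∀ (n : ℕ) (S : M) (f g : Fin n → M),
    (∀ j, S * g j = f j * S) → S * (List.ofFn g).prod = (List.ofFn f).prod * S := by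
  intro n
  induction n with
  | zero => intro S f g h; simp
  | succ n ih =>
    intro S f g h
    have := ih S (fun j => f j.succ) (fun j => g j.succ) (fun j => h j.succ)
    simp only [List.ofFn_succ, List.prod_cons]
    rw [← mul_assoc, h 0, mul_assoc, this, mul_assoc]

/-- For balanced local systems, the two trivial-monodromy conditions
(above and below the real axis) in equation (defoo) are equivalent. -/
theorem stmt_4 (N : ℕ) (Λ : Fin (N+1) → ℂ) (hΛ0 : ∀ j, Λ j ≠ 0)
    (hΛ : ∀ j, Λ j + (Λ j)⁻¹ ≠ 0) (b : Fin (N+1) → ℂ)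
    (J B : Fin (N+1) → Matrix (Fin 2) (Fin 2) ℂ)
    (hJ : ∀ j, J j = ((Λ j + (Λ j)⁻¹) / 2) •
      !![Complex.I, -((Λ j - (Λ j)⁻¹)^2 / (Λ j + (Λ j)⁻¹)^2); 1, Complex.I])
    (hB : ∀ j, B j = !![1, b j; 0, -1]) :
    (List.ofFn (fun j => J j * B j)).prod = -1 ↔
      (List.ofFn (fun j => (J j)⁻¹ * B j)).prod = -1 := by
  set S : Matrix (Fin 2) (Fin 2) ℂ := !![1, 2*Complex.I; 0, 1] with hSdef
  set T : Matrix (Fin 2) (Fin 2) ℂ := !![1, -(2*Complex.I); 0, 1] with hTdef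
  have hST : S * T = 1 := by
    ext i k
    fin_cases i <;> fin_cases k <;>
      simp [hSdef, hTdef, Matrix.mul_apply, Fin.sum_univ_two, Matrix.one_apply] <;> ring
  have hTS : T * S = 1 := by
    ext i k
    fin_cases i <;> fin_cases k <;>
      simp [hSdef, hTdef, Matrix.mul_apply, Fin.sum_univ_two, Matrix.one_apply] <;> ring
  have hJinv : ∀ j, (J j)⁻¹ = ((Λ j + (Λ j)⁻¹) / 2) •
      !![-Complex.I, -((Λ j - (Λ j)⁻¹)^2 / (Λ j + (Λ j)⁻¹)^2); 1, -Complex.I] := by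
    intro j
    apply Matrix.inv_eq_right_inv
    rw [hJ j]
    exact Jmul (Λ j) (hΛ0 j) (hΛ j)
  have key : ∀ j, S * ((J j)⁻¹ * B j) = (J j * B j) * S := by
    intro j
    rw [hJinv j, hJ j, hB j]
    ext i k
    fin_cases i <;> fin_cases k <;>
      simp [hSdef, Matrix.mul_apply, Fin.sum_univ_two, Complex.I_mul_I] <;> ring
  have main := conj_ofFn (N+1) S (fun j => J j * B j) (fun j => (J j)⁻¹ * B j) key
  constructor
  · intro h
    have : (List.ofFn fun j => (J j)⁻¹ * B j).prod
        = T * ((List.ofFn fun j => J j * B j).prod * S) := by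
      rw [← main, ← mul_assoc, hTS, one_mul]
    rw [this, h]
    rw [neg_one_mul, mul_neg, hTS]
  · intro h
    have : (List.ofFn fun j => J j * B j).prod
        = S * (List.ofFn fun j => (J j)⁻¹ * B j).prod * T := by
      rw [main, mul_assoc, hST, mul_one]
    rw [this, h]
    rw [mul_neg_one, neg_mul, hST]
end

section
/- Let t₀, …, t_m be distinct complex numbers and λ₀, …, λ_m ∈ ℂ, and set λ = Σ_i λ_i. On ℂ[y₀, …, y_m] define Ĝ_i = Σ_{j ≠ i} (1/(t_i - t_j)) · ( -(y_i - y_j)² ∂_i ∂_j + (y_i - y_j)(λ_i ∂_j - λ_j ∂_i) ) and the Euler operator E = Σ_i y_i ∂_i. Then for every polynomial ψ ∈ ℂ[y₀, …, y_m] satisfying Σ_i ∂_i ψ = 0 (invariance under simultaneous translation), one has (Σ_{i=0}^m t_i Ĝ_i) ψ = E(E - λ - 1) ψ. -/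
open MvPolynomial

/-- The modified Gaudin Hamiltonian `Ĝ_i` (without the constant term) in the
polynomial realization on `ℂ[y₀,…,y_m]`. -/
noncomputable def gaudinHatOp (m : ℕ) (t l : Fin (m+1) → ℂ) (i : Fin (m+1))
    (ψ : MvPolynomial (Fin (m+1)) ℂ) : MvPolynomial (Fin (m+1)) ℂ :=
  ∑ j ∈ Finset.univ.erase i, C ((t i - t j)⁻¹) *
    ( -((X i - X j) ^ 2 * pderiv i (pderiv j ψ))
      + (X i - X j) * (C (l i) * pderiv j ψ - C (l j) * pderiv i ψ) )

/-- The Euler operator `E = Σ_i y_i ∂_i`. -/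
noncomputable def eulerOp (m : ℕ) (ψ : MvPolynomial (Fin (m+1)) ℂ) :
    MvPolynomial (Fin (m+1)) ℂ :=
  ∑ i, X i * pderiv i ψ

lemma pderiv_pderiv_comm {σ : Type*} {R : Type*} [CommSemiring R] (i j : σ)
    (f : MvPolynomial σ R) : pderiv i (pderiv j f) = pderiv j (pderiv i f) := by
  classical
  induction f using MvPolynomial.induction_on' with
  | add p q hp hq => simp [hp, hq]
  | monomial s a =>
    simp only [pderiv_monomial]
    by_cases h : i = j
    · subst h; rfl
    · rw [tsub_right_comm]
      congr 1
      simp [Finsupp.tsub_apply, Finsupp.single_apply, h, Ne.symm h]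
      ring

/-- On translation-invariant polynomials, `Σ_i t_i Ĝ_i = E(E - λ - 1)` where
`λ = Σ_i λ_i` and `E` is the Euler operator. -/
theorem stmt_10 (m : ℕ) (t : Fin (m+1) → ℂ) (ht : Function.Injective t)
    (l : Fin (m+1) → ℂ) (ψ : MvPolynomial (Fin (m+1)) ℂ)
    (hψ : ∑ i, pderiv i ψ = 0) :
    ∑ i, C (t i) * gaudinHatOp m t l i ψ =
      eulerOp m (eulerOp m ψ) - C ((∑ i, l i) + 1) * eulerOp m ψ := by
  classical
  set A : Fin (m+1) → Fin (m+1) → MvPolynomial (Fin (m+1)) ℂ := fun i j =>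
    -((X i - X j) ^ 2 * pderiv i (pderiv j ψ))
      + (X i - X j) * (C (l i) * pderiv j ψ - C (l j) * pderiv i ψ) with hA
  set g : Fin (m+1) → Fin (m+1) → MvPolynomial (Fin (m+1)) ℂ := fun i j =>
    C (t i * (t i - t j)⁻¹) * A i j with hg
  have hAdiag : ∀ i, A i i = 0 := by intro i; simp [hA]
  have hsymA : ∀ i j, A j i = A i j := by
    intro i j
    simp only [hA]
    rw [pderiv_pderiv_comm]
    ring
  have hDj : ∀ i, ∑ j, pderiv i (pderiv j ψ) = 0 := by
    intro i; rw [← map_sum, hψ, map_zero]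
  have hDi : ∀ j : Fin (m+1), ∑ i, pderiv i (pderiv j ψ) = 0 := by
    intro j
    calc ∑ i, pderiv i (pderiv j ψ) = ∑ i, pderiv j (pderiv i ψ) :=
          Finset.sum_congr rfl fun i _ => pderiv_pderiv_comm i j ψ
      _ = pderiv j (∑ i, pderiv i ψ) := (map_sum _ _ _).symm
      _ = 0 := by rw [hψ, map_zero]
  -- LHS as a full double sum
  have hL : ∑ i, C (t i) * gaudinHatOp m t l i ψ = ∑ i, ∑ j, g i j := by
    refine Finset.sum_congr rfl fun i _ => ?_
    unfold gaudinHatOp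
    rw [Finset.mul_sum]
    rw [show ∑ j, g i j = ∑ j ∈ Finset.univ.erase i, g i j from
      (Finset.sum_erase _ (by simp [hg, hAdiag i])).symm]
    refine Finset.sum_congr rfl fun j _ => ?_
    simp only [hg, hA, map_mul]
    ring
  set S := ∑ i, ∑ j, g i j with hS
  -- Symmetrization: S + S = ∑ᵢ∑ⱼ A i j
  have hcoef : ∀ i j : Fin (m+1), g i j + g j i = A i j := by
    intro i j
    by_cases h : i = j
    · subst h; simp [hg, hAdiag]
    · have hne : t i - t j ≠ 0 := sub_ne_zero.mpr (fun hc => h (ht hc))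
      have hne' : t j - t i ≠ 0 := sub_ne_zero.mpr (fun hc => h (ht hc).symm)
      have hid : t i * (t i - t j)⁻¹ + t j * (t j - t i)⁻¹ = 1 := by
        field_simp
        ring
      calc g i j + g j i = (C (t i * (t i - t j)⁻¹) + C (t j * (t j - t i)⁻¹)) * A i j := by
            simp only [hg, hsymA i j]; ring
        _ = A i j := by rw [← map_add, hid, map_one, one_mul]
  have h2S : S + S = ∑ i, ∑ j, A i j := by
    conv_lhs => rw [hS]
    nth_rewrite 2 [Finset.sum_comm]
    rw [← Finset.sum_add_distrib]
    refine Finset.sum_congr rfl fun i _ => ?_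
    rw [← Finset.sum_add_distrib]
    exact Finset.sum_congr rfl fun j _ => hcoef i j
  -- Abbreviations
  set Q : MvPolynomial (Fin (m+1)) ℂ := ∑ i, ∑ j, X i * X j * pderiv i (pderiv j ψ) with hQ
  set E := eulerOp m ψ with hE
  -- Compute the symmetrized sum
  have hT : ∑ i, ∑ j, A i j = 2 * Q - 2 * C (∑ i, l i) * E := by
    have key : ∀ i j : Fin (m+1), A i j =
        2 * (X i * X j * pderiv i (pderiv j ψ))
        - X i ^ 2 * pderiv i (pderiv j ψ)
        - X j ^ 2 * pderiv i (pderiv j ψ)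
        + (C (l i) * X i) * pderiv j ψ
        - C (l j) * (X i * pderiv i ψ)
        - C (l i) * (X j * pderiv j ψ)
        + (C (l j) * X j) * pderiv i ψ := by
      intro i j; simp only [hA]; ring
    simp only [key, Finset.sum_add_distrib, Finset.sum_sub_distrib]
    have e1 : ∑ i : Fin (m+1), ∑ j, 2 * (X i * X j * pderiv i (pderiv j ψ)) = 2 * Q := by
      rw [hQ, Finset.mul_sum]
      exact Finset.sum_congr rfl fun i _ => by rw [Finset.mul_sum]
    have e2 : ∑ i : Fin (m+1), ∑ j, X i ^ 2 * pderiv i (pderiv j ψ) = 0 := by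
      refine Finset.sum_eq_zero fun i _ => ?_
      rw [← Finset.mul_sum, hDj i, mul_zero]
    have e3 : ∑ i : Fin (m+1), ∑ j, X j ^ 2 * pderiv i (pderiv j ψ) = 0 := by
      rw [Finset.sum_comm]
      refine Finset.sum_eq_zero fun j _ => ?_
      rw [← Finset.mul_sum, hDi j, mul_zero]
    have e4 : ∑ i : Fin (m+1), ∑ j, (C (l i) * X i) * pderiv j ψ = 0 := by
      refine Finset.sum_eq_zero fun i _ => ?_
      rw [← Finset.mul_sum, hψ, mul_zero]
    have e5 : ∑ i : Fin (m+1), ∑ j, C (l j) * (X i * pderiv i ψ) = C (∑ i, l i) * E := by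
      have : ∀ i : Fin (m+1), ∑ j, C (l j) * (X i * pderiv i ψ)
          = C (∑ j, l j) * (X i * pderiv i ψ) := by
        intro i; rw [← Finset.sum_mul, ← map_sum]
      simp only [this]
      rw [← Finset.mul_sum, hE, eulerOp]
    have e6 : ∑ i : Fin (m+1), ∑ j, C (l i) * (X j * pderiv j ψ) = C (∑ i, l i) * E := by
      have : ∀ i : Fin (m+1), ∑ j, C (l i) * (X j * pderiv j ψ) = C (l i) * E := by
        intro i; rw [← Finset.mul_sum, hE, eulerOp]
      simp only [this]
      rw [← Finset.sum_mul, ← map_sum]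
    have e7 : ∑ i : Fin (m+1), ∑ j, (C (l j) * X j) * pderiv i ψ = 0 := by
      rw [Finset.sum_comm]
      refine Finset.sum_eq_zero fun j _ => ?_
      rw [← Finset.mul_sum, hψ, mul_zero]
    rw [e1, e2, e3, e4, e5, e6, e7]
    ring
  -- Compute E(E ψ)
  have hEE : eulerOp m E = E + Q := by
    rw [hE, eulerOp]
    have hin : ∀ i : Fin (m+1), pderiv i (eulerOp m ψ)
        = pderiv i ψ + ∑ j, X j * pderiv i (pderiv j ψ) := by
      intro i
      rw [eulerOp, map_sum]
      have step : ∀ j ∈ Finset.univ, pderiv i (X j * pderiv j ψ)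
          = (if j = i then pderiv j ψ else 0) + X j * pderiv i (pderiv j ψ) := by
        intro j _
        rw [pderiv_mul]
        congr 1
        by_cases h : j = i
        · subst h; simp
        · simp [h]
      rw [Finset.sum_congr rfl step, Finset.sum_add_distrib, Finset.sum_ite_eq'
        Finset.univ i (fun j => pderiv j ψ)]
      simp
    have hQ' : ∑ i : Fin (m+1), X i * ∑ j, X j * pderiv i (pderiv j ψ) = Q := by
      rw [hQ]
      refine Finset.sum_congr rfl fun i _ => ?_
      rw [Finset.mul_sum]
      exact Finset.sum_congr rfl fun j _ => by ring
    simp only [hin, mul_add, Finset.sum_add_distrib, hQ']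
    congr 1
  -- Conclude by cancelling 2
  have h2 : (2 : MvPolynomial (Fin (m+1)) ℂ) ≠ 0 := two_ne_zero
  refine mul_left_cancel₀ h2 ?_
  rw [hL, two_mul, h2S, hT, hEE, map_add, map_one]
  ring
end

section
/- Let t₀, …, t_m be distinct complex numbers and λ₀, …, λ_m ∈ ℂ. The Gaudin operators G_i = Σ_{j ≠ i} (1/(t_i - t_j)) · ( -(y_i - y_j)² ∂_i ∂_j + (y_i - y_j)(λ_i ∂_j - λ_j ∂_i) + λ_i λ_j / 2 ) on ℂ[y₀, …, y_m] pairwise commute: [G_i, G_k] = 0 for all i, k. -/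
open MvPolynomial

/-- The `i`-th Gaudin Hamiltonian `G_i` in the polynomial realization on
`ℂ[y₀,…,y_m]`. -/
noncomputable def gaudinOp (m : ℕ) (t l : Fin (m+1) → ℂ) (i : Fin (m+1))
    (ψ : MvPolynomial (Fin (m+1)) ℂ) : MvPolynomial (Fin (m+1)) ℂ :=
  ∑ j ∈ Finset.univ.erase i, C ((t i - t j)⁻¹) *
    ( -((X i - X j) ^ 2 * pderiv i (pderiv j ψ))
      + (X i - X j) * (C (l i) * pderiv j ψ - C (l j) * pderiv i ψ)
      + C (l i * l j / 2) * ψ )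

set_option linter.unnecessarySeqFocus false

theorem pd_comm {σ R : Type*} [CommSemiring R] (a b : σ) (f : MvPolynomial σ R) :
    pderiv a (pderiv b f) = pderiv b (pderiv a f) := by
  classical
  induction f using MvPolynomial.induction_on with
  | C c => simp
  | add p q hp hq => simp [hp, hq]
  | mul_X p n ih =>
      simp only [pderiv_mul, map_add, pderiv_X, ih, Pi.single_apply]
      split_ifs <;> simp [pderiv_mul] <;> ring


lemma pd_two {σ R : Type*} [CommSemiring R] (i : σ) :
    pderiv i (2 : MvPolynomial σ R) = 0 := by
  rw [← one_add_one_eq_two, map_add, pderiv_one, add_zero]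

noncomputable def omOp (m : ℕ) (l : Fin (m+1) → ℂ) (a b : Fin (m+1)) :
    Module.End ℂ (MvPolynomial (Fin (m+1)) ℂ) :=
  -(LinearMap.mulLeft ℂ ((X a - X b)^2) * ((pderiv a).toLinearMap * (pderiv b).toLinearMap))
  + LinearMap.mulLeft ℂ (X a - X b) *
      (LinearMap.mulLeft ℂ (C (l a)) * (pderiv b).toLinearMap
        - LinearMap.mulLeft ℂ (C (l b)) * (pderiv a).toLinearMap)
  + LinearMap.mulLeft ℂ (C (l a * l b / 2))

lemma omOp_apply (m : ℕ) (l : Fin (m+1) → ℂ) (a b : Fin (m+1))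
    (ψ : MvPolynomial (Fin (m+1)) ℂ) :
    omOp m l a b ψ = -((X a - X b) ^ 2 * pderiv a (pderiv b ψ))
      + (X a - X b) * (C (l a) * pderiv b ψ - C (l b) * pderiv a ψ)
      + C (l a * l b / 2) * ψ := by
  simp [omOp, Module.End.mul_apply]

lemma omOp_symm (m : ℕ) (l : Fin (m+1) → ℂ) (a b : Fin (m+1)) :
    omOp m l a b = omOp m l b a := by
  refine LinearMap.ext fun ψ => ?_
  simp only [omOp_apply]
  rw [pd_comm b a]
  ring

set_option maxHeartbeats 1600000 in
lemma omOp_comm_disjoint (m : ℕ) (l : Fin (m+1) → ℂ) (a b c d : Fin (m+1))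
    (hca : c ≠ a) (hcb : c ≠ b) (hda : d ≠ a) (hdb : d ≠ b) :
    omOp m l a b * omOp m l c d = omOp m l c d * omOp m l a b := by
  refine LinearMap.ext fun ψ => ?_
  simp only [Module.End.mul_apply, omOp_apply, map_add, map_sub, map_neg, pderiv_mul, pow_two,
    pderiv_C, pderiv_X_self, pderiv_X_of_ne hca, pderiv_X_of_ne hcb,
    pderiv_X_of_ne hda, pderiv_X_of_ne hdb, pderiv_X_of_ne hca.symm, pderiv_X_of_ne hcb.symm,
    pderiv_X_of_ne hda.symm, pderiv_X_of_ne hdb.symm, map_zero, mul_zero, zero_mul,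
    sub_zero, add_zero, zero_add, neg_zero, mul_one, one_mul, pd_two]
  simp only [pd_comm b a, pd_comm c a, pd_comm d a, pd_comm c b, pd_comm d b, pd_comm d c]
  ring

set_option maxHeartbeats 1600000 in
lemma omOp_key (m : ℕ) (l : Fin (m+1) → ℂ) (a b c : Fin (m+1))
    (hab : a ≠ b) (hac : a ≠ c) (hbc : b ≠ c) :
    omOp m l a b * omOp m l a c - omOp m l a c * omOp m l a b
      = omOp m l b c * omOp m l a b - omOp m l a b * omOp m l b c := by
  refine LinearMap.ext fun ψ => ?_
  simp (config := { maxSteps := 10000000 }) only [LinearMap.sub_apply, Module.End.mul_apply,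
    omOp_apply, map_add, map_sub, map_neg, pderiv_mul, pow_two, pderiv_C, pderiv_X_self, pderiv_X_of_ne hab, pderiv_X_of_ne hac,
    pderiv_X_of_ne hbc, pderiv_X_of_ne hab.symm, pderiv_X_of_ne hac.symm,
    pderiv_X_of_ne hbc.symm, map_zero, mul_zero, zero_mul,
    sub_zero, add_zero, zero_add, neg_zero, mul_one, one_mul, pd_two]
  simp only [pd_comm b a, pd_comm c a, pd_comm c b]
  ring


section main
open Finset
variable {m : ℕ} (t l : Fin (m+1) → ℂ)

noncomputable def GOp (i : Fin (m+1)) : Module.End ℂ (MvPolynomial (Fin (m+1)) ℂ) :=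
  ∑ j ∈ Finset.univ.erase i, (t i - t j)⁻¹ • omOp m l i j

lemma GOp_commute (ht : Function.Injective t) (i k : Fin (m+1)) :
    GOp t l i * GOp t l k = GOp t l k * GOp t l i := by
  rcases eq_or_ne i k with rfl | hik
  · rfl
  have hsub : ∀ x y : Fin (m+1), x ≠ y → t x - t y ≠ 0 := fun x y h =>
    sub_ne_zero.mpr (fun he => h (ht he))
  set Ω := omOp m l with hΩ
  set F : Fin (m+1) → Module.End ℂ (MvPolynomial (Fin (m+1)) ℂ) :=
    fun j => (t i - t j)⁻¹ • Ω i j with hF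
  set G : Fin (m+1) → Module.End ℂ (MvPolynomial (Fin (m+1)) ℂ) :=
    fun j => (t k - t j)⁻¹ • Ω k j with hG
  set H : Fin (m+1) → Fin (m+1) → Module.End ℂ (MvPolynomial (Fin (m+1)) ℂ) :=
    fun j j' => F j * G j' - G j' * F j with hH
  rw [← sub_eq_zero]
  have expand : GOp t l i * GOp t l k - GOp t l k * GOp t l i
      = ∑ j ∈ univ.erase i, ∑ j' ∈ univ.erase k, H j j' := by
    rw [GOp, GOp, Finset.sum_mul_sum, Finset.sum_mul_sum, Finset.sum_comm (t := univ.erase i),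
      ← Finset.sum_sub_distrib]
    exact Finset.sum_congr rfl fun j _ => by rw [← Finset.sum_sub_distrib]
  rw [expand]
  -- index set away from i and k
  set S : Finset (Fin (m+1)) := (univ.erase i).erase k with hS
  have hki : k ∈ univ.erase i := Finset.mem_erase_of_ne_of_mem (Ne.symm hik) (mem_univ k)
  have hik' : i ∈ univ.erase k := Finset.mem_erase_of_ne_of_mem hik (mem_univ i)
  have hSi : univ.erase i = insert k S := (Finset.insert_erase hki).symm
  have hSk : univ.erase k = insert i S := by
    rw [hS, Finset.erase_right_comm]
    exact (Finset.insert_erase hik').symm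
  have hkS : k ∉ S := Finset.notMem_erase _ _
  have hiS : i ∉ S := by rw [hS, Finset.erase_right_comm]; exact Finset.notMem_erase _ _
  have hmem : ∀ j ∈ S, j ≠ i ∧ j ≠ k := fun j hj =>
    ⟨Finset.ne_of_mem_erase (Finset.mem_of_mem_erase hj), Finset.ne_of_mem_erase hj⟩
  -- scalar-swap helper
  have hswap : ∀ (x y : ℂ) (P Q : Module.End ℂ (MvPolynomial (Fin (m+1)) ℂ)),
      P * Q = Q * P → (x • P) * (y • Q) - (y • Q) * (x • P) = 0 := by
    intro x y P Q h
    rw [smul_mul_assoc, smul_mul_assoc, mul_smul_comm, mul_smul_comm, h, smul_smul, smul_smul,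
      mul_comm x y, sub_self]
  have hsmul : ∀ (x y : ℂ) (P Q : Module.End ℂ (MvPolynomial (Fin (m+1)) ℂ)),
      (x • P) * (y • Q) - (y • Q) * (x • P) = (x * y) • (P * Q - Q * P) := by
    intro x y P Q
    rw [smul_mul_assoc, smul_mul_assoc, mul_smul_comm, mul_smul_comm, smul_smul, smul_smul,
      mul_comm y x, smul_sub]
  have hsym : ∀ a b, Ω a b = Ω b a := fun a b => omOp_symm m l a b
  -- vanishing of H k i
  have hHki : H k i = 0 := by
    simp only [hH, hF, hG]
    exact hswap _ _ _ _ (by rw [hsym k i])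
  -- off-diagonal vanishing in S × S
  have hoff : ∀ j ∈ S, ∀ b ∈ S, b ≠ j → H j b = 0 := by
    intro j hj b hb hbj
    obtain ⟨hji, hjk⟩ := hmem j hj
    obtain ⟨hbi, hbk⟩ := hmem b hb
    simp only [hH, hF, hG]
    exact hswap _ _ _ _ (omOp_comm_disjoint m l i j k b (Ne.symm hik) hjk.symm
      hbi hbj)
  -- the key per-index cancellation
  have hkey : ∀ j ∈ S, H k j + (H j i + H j j) = 0 := by
    intro j hj
    obtain ⟨hji, hjk⟩ := hmem j hj
    have hA := omOp_key m l i j k (Ne.symm hji) hik hjk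
    have hB := omOp_key m l i k j hik (Ne.symm hji) (Ne.symm hjk)
    rw [← hΩ] at hA hB
    have e1 : Ω i k * Ω k j - Ω k j * Ω i k = Ω i j * Ω i k - Ω i k * Ω i j := by
      rw [show Ω i j * Ω i k - Ω i k * Ω i j = -(Ω i k * Ω i j - Ω i j * Ω i k) from
        (neg_sub _ _).symm, hB, neg_sub]
    have e2 : Ω i j * Ω k i - Ω k i * Ω i j = Ω i j * Ω i k - Ω i k * Ω i j := by
      rw [hsym k i]
    have e3 : Ω i j * Ω k j - Ω k j * Ω i j = -(Ω i j * Ω i k - Ω i k * Ω i j) := by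
      rw [hsym k j, hA, neg_sub]
    simp only [hH, hF, hG]
    have hrw : ∀ (x y z : ℂ) (A : Module.End ℂ (MvPolynomial (Fin (m+1)) ℂ)),
        x • A + (y • A + z • -A) = (x + y - z) • A := by
      intro x y z A
      module
    rw [hsmul, hsmul, hsmul, e1, e2, e3, hrw]
    have hc : (t i - t k)⁻¹ * (t k - t j)⁻¹ + (t i - t j)⁻¹ * (t k - t i)⁻¹
        - (t i - t j)⁻¹ * (t k - t j)⁻¹ = 0 := by
      have h1 := hsub i k hik
      have h2 := hsub i j (Ne.symm hji)
      have h3 := hsub k j (Ne.symm hjk)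
      have h4 : t k - t i ≠ 0 := hsub k i (Ne.symm hik)
      field_simp
      ring
    rw [hc, zero_smul]
  -- assemble
  rw [hSi, hSk, Finset.sum_insert hkS, Finset.sum_insert hiS, hHki, zero_add]
  have hdiag : ∀ j ∈ S, ∑ j' ∈ insert i S, H j j' = H j i + H j j := by
    intro j hj
    rw [Finset.sum_insert hiS]
    congr 1
    exact Finset.sum_eq_single_of_mem j hj (fun b hb hbj => hoff j hj b hb hbj)
  rw [Finset.sum_congr rfl hdiag, ← Finset.sum_add_distrib]
  exact Finset.sum_eq_zero hkey



lemma gaudinOp_eq (i : Fin (m+1)) (ψ : MvPolynomial (Fin (m+1)) ℂ) :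
    gaudinOp m t l i ψ = GOp t l i ψ := by
  rw [gaudinOp, GOp, LinearMap.sum_apply]
  refine Finset.sum_congr rfl fun j _ => ?_
  rw [LinearMap.smul_apply, omOp_apply, smul_eq_C_mul]

end main

/-- The Gaudin Hamiltonians pairwise commute: `[G_i, G_k] = 0`. -/
theorem stmt_11 (m : ℕ) (t : Fin (m+1) → ℂ) (ht : Function.Injective t)
    (l : Fin (m+1) → ℂ) (i k : Fin (m+1)) (ψ : MvPolynomial (Fin (m+1)) ℂ) :
    gaudinOp m t l i (gaudinOp m t l k ψ) = gaudinOp m t l k (gaudinOp m t l i ψ) := by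
  simp only [gaudinOp_eq]
  have h := GOp_commute t l ht i k
  calc GOp t l i (GOp t l k ψ) = (GOp t l i * GOp t l k) ψ := rfl
    _ = (GOp t l k * GOp t l i) ψ := by rw [h]
    _ = GOp t l k (GOp t l i ψ) := rfl
end

section
/- Let t₀, …, t_m and w₁, …, w_n be pairwise distinct complex numbers (all m+n+1 of them distinct), and λ₀, …, λ_m ∈ ℂ. Define u(x) = Σ_{i=0}^m λ_i/(2(x - t_i)) - Σ_{j=1}^n 1/(x - w_j) and v(x) = u(x)² - u'(x), a rational function. Then for each j: (a) lim_{x → w_j} (x - w_j)² v(x) = 0, i.e. v has at most a simple pole at w_j; (b) the residue of v at w_j equals -2·( Σ_{i=0}^m λ_i/(2(w_j - t_i)) - Σ_{s ≠ j} 1/(w_j - w_s) ). In particular, v is regular at w_j if and only if the Bethe Ansatz equation Σ_{i=0}^m λ_i/(w_j - t_i) = Σ_{s ≠ j} 2/(w_j - w_s) holds. -/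
open Filter Topology

private lemma deriv_aux1 (a L x : ℂ) (h : x ≠ a) :
    HasDerivAt (fun y => L / (2 * (y - a))) (-(L / (2 * (x - a) ^ 2))) x := by
  have hxa : x - a ≠ 0 := sub_ne_zero.2 h
  have hne : (2:ℂ) * (x - a) ≠ 0 := mul_ne_zero two_ne_zero hxa
  have hd : HasDerivAt (fun y : ℂ => 2 * (y - a)) 2 x := by
    simpa using ((hasDerivAt_id x).sub_const a).const_mul (2:ℂ)
  have := (hasDerivAt_const x L).fun_div hd hne
  refine this.congr_deriv ?_
  field_simp
  ring

private lemma deriv_aux2 (a x : ℂ) (h : x ≠ a) :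
    HasDerivAt (fun y => 1 / (y - a)) (-(1 / (x - a) ^ 2)) x := by
  have hxa : x - a ≠ 0 := sub_ne_zero.2 h
  have hd : HasDerivAt (fun y : ℂ => y - a) 1 x := (hasDerivAt_id x).sub_const a
  have := (hasDerivAt_const x (1:ℂ)).fun_div hd hxa
  refine this.congr_deriv ?_
  field_simp
  ring

/-- Behaviour of the Miura transform `v = u² - u'` of
`u(x) = Σ_i λ_i/(2(x-t_i)) - Σ_j 1/(x-w_j)` at a Bethe root `w_j`:
(a) `v` has at most a simple pole at `w_j`;
(b) its residue there is `-2·(Σ_i λ_i/(2(w_j-t_i)) - Σ_{s≠j} 1/(w_j-w_s))`;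
(c) `v` is regular at `w_j` (zero residue) iff the Bethe Ansatz equation holds. -/
theorem stmt_13 (m n : ℕ) (t : Fin (m+1) → ℂ) (w : Fin n → ℂ) (l : Fin (m+1) → ℂ)
    (hdist : Function.Injective (Sum.elim t w))
    (u u' v : ℂ → ℂ)
    (hu : ∀ x, u x = (∑ i, l i / (2 * (x - t i))) - ∑ j, 1 / (x - w j))
    (hu' : ∀ x, (∀ i, x ≠ t i) → (∀ j, x ≠ w j) → HasDerivAt u (u' x) x)
    (hv : ∀ x, v x = (u x) ^ 2 - u' x) (j : Fin n) :
    Tendsto (fun x => (x - w j) ^ 2 * v x) (𝓝[≠] (w j)) (𝓝 0) ∧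
    Tendsto (fun x => (x - w j) * v x) (𝓝[≠] (w j))
      (𝓝 (-2 * ((∑ i, l i / (2 * (w j - t i))) -
        ∑ s ∈ Finset.univ.erase j, 1 / (w j - w s)))) ∧
    (Tendsto (fun x => (x - w j) * v x) (𝓝[≠] (w j)) (𝓝 0) ↔
      (∑ i, l i / (w j - t i)) = ∑ s ∈ Finset.univ.erase j, 2 / (w j - w s)) := by
  classical
  set c : ℂ := w j with hc
  -- distinctness facts
  have htj : ∀ i, c ≠ t i := by
    intro i h
    have : (Sum.inl i : Fin (m+1) ⊕ Fin n) = Sum.inr j := by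
      apply hdist
      simp only [Sum.elim_inl, Sum.elim_inr]
      rw [← hc]; exact h.symm
    simp at this
  have hws : ∀ s ∈ Finset.univ.erase j, c ≠ w s := by
    intro s hs h
    have : (Sum.inr j : Fin (m+1) ⊕ Fin n) = Sum.inr s := by
      apply hdist
      simp only [Sum.elim_inr]
      rw [← hc]; exact h
    simp only [Sum.inr.injEq] at this
    exact (Finset.mem_erase.1 hs).1 this.symm
  -- the regular parts
  set G : ℂ → ℂ := fun x =>
    (∑ i, l i / (2 * (x - t i))) - ∑ s ∈ Finset.univ.erase j, 1 / (x - w s) with hGdef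
  set G' : ℂ → ℂ := fun x =>
    (∑ i, -(l i / (2 * (x - t i) ^ 2))) - ∑ s ∈ Finset.univ.erase j, -(1 / (x - w s) ^ 2)
    with hG'def
  -- eventually, x avoids all singularities
  have hgood : ∀ᶠ x in 𝓝[≠] c, (∀ i, x ≠ t i) ∧ ∀ s, x ≠ w s := by
    have h1 : ∀ᶠ x in 𝓝 c, ∀ i, x ≠ t i :=
      eventually_all.2 fun i => eventually_ne_nhds (htj i)
    have h2 : ∀ᶠ x in 𝓝 c, ∀ s ∈ Finset.univ.erase j, x ≠ w s :=
      (eventually_all_finset _).2 fun s hs => eventually_ne_nhds (hws s hs)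
    have h3 : ∀ᶠ x in 𝓝[≠] c, x ≠ c := eventually_mem_nhdsWithin
    filter_upwards [(h1.and h2).filter_mono nhdsWithin_le_nhds, h3] with x hx hxc
    refine ⟨hx.1, fun s => ?_⟩
    by_cases hsj : s = j
    · subst hsj; exact hxc
    · exact hx.2 s (Finset.mem_erase.2 ⟨hsj, Finset.mem_univ s⟩)
  -- key pointwise identity on a punctured neighborhood
  have hkey : ∀ᶠ x in 𝓝[≠] c,
      v x = G x ^ 2 - G' x - 2 * G x / (x - c) := by
    filter_upwards [hgood, eventually_mem_nhdsWithin] with x hx hxc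
    obtain ⟨hti, hwsx⟩ := hx
    have hxc' : x ≠ c := hxc
    have hxcne : x - c ≠ 0 := sub_ne_zero.2 hxc'
    -- u x = G x - 1/(x - c)
    have hux : u x = G x - 1 / (x - c) := by
      rw [hu]
      simp only [hGdef]
      rw [← Finset.add_sum_erase _ (fun s => 1 / (x - w s)) (Finset.mem_univ j), ← hc]
      ring
    -- derivative of u at x
    have hU : HasDerivAt u
        ((∑ i, -(l i / (2 * (x - t i) ^ 2))) - ∑ s, -(1 / (x - w s) ^ 2)) x := by
      have hfun : u = fun y => (∑ i, l i / (2 * (y - t i))) - ∑ s, 1 / (y - w s) :=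
        funext hu
      rw [hfun]
      exact HasDerivAt.sub
        (HasDerivAt.fun_sum fun i _ => deriv_aux1 (t i) (l i) x (hti i))
        (HasDerivAt.fun_sum fun s _ => deriv_aux2 (w s) x (hwsx s))
    have hu'x : u' x = (∑ i, -(l i / (2 * (x - t i) ^ 2))) - ∑ s, -(1 / (x - w s) ^ 2) :=
      (hu' x hti hwsx).unique hU
    have hu'x2 : u' x = G' x + 1 / (x - c) ^ 2 := by
      rw [hu'x]
      simp only [hG'def]
      rw [← Finset.add_sum_erase _ (fun s => -(1 / (x - w s) ^ 2)) (Finset.mem_univ j), ← hc]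
      ring
    rw [hv, hux, hu'x2]
    field_simp
    ring
  -- limits of the continuous model functions
  have hGc : ContinuousAt G c := by
    rw [hGdef]
    apply ContinuousAt.sub
    · exact tendsto_finset_sum _ fun i _ =>
        ContinuousAt.div continuousAt_const (by fun_prop)
          (mul_ne_zero two_ne_zero (sub_ne_zero.2 (htj i)))
    · exact tendsto_finset_sum _ fun s hs =>
        ContinuousAt.div continuousAt_const (by fun_prop)
          (sub_ne_zero.2 (hws s hs))
  have hG'c : ContinuousAt G' c := by
    rw [hG'def]
    apply ContinuousAt.sub
    · exact tendsto_finset_sum _ fun i _ =>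
        ContinuousAt.neg <| ContinuousAt.div continuousAt_const (by fun_prop)
          (mul_ne_zero two_ne_zero (pow_ne_zero 2 (sub_ne_zero.2 (htj i))))
    · exact tendsto_finset_sum _ fun s hs =>
        ContinuousAt.neg <| ContinuousAt.div continuousAt_const (by fun_prop)
          (pow_ne_zero 2 (sub_ne_zero.2 (hws s hs)))
  -- part (b)
  have hb : Tendsto (fun x => (x - c) * v x) (𝓝[≠] c) (𝓝 (-2 * G c)) := by
    have hmodel : Tendsto (fun x => (x - c) * (G x ^ 2 - G' x) - 2 * G x) (𝓝 c)
        (𝓝 ((c - c) * (G c ^ 2 - G' c) - 2 * G c)) := by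
      exact (((continuousAt_id.sub continuousAt_const).mul
        ((hGc.pow 2).sub hG'c)).sub (hGc.const_mul 2)).tendsto
    have hval : (c - c) * (G c ^ 2 - G' c) - 2 * G c = -2 * G c := by ring
    rw [hval] at hmodel
    refine (hmodel.mono_left nhdsWithin_le_nhds).congr' ?_
    filter_upwards [hkey, eventually_mem_nhdsWithin] with x hx hxc
    have hxcne : x - c ≠ 0 := sub_ne_zero.2 hxc
    rw [hx]
    field_simp
  -- part (a)
  have ha : Tendsto (fun x => (x - c) ^ 2 * v x) (𝓝[≠] c) (𝓝 0) := by
    have h1 : Tendsto (fun x : ℂ => x - c) (𝓝[≠] c) (𝓝 0) := by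
      have h0 : Tendsto (fun x : ℂ => x - c) (𝓝 c) (𝓝 (c - c)) :=
        (continuous_id.sub continuous_const).tendsto c
      rw [sub_self] at h0
      exact h0.mono_left nhdsWithin_le_nhds
    have h2 := h1.mul hb
    rw [zero_mul] at h2
    exact h2.congr fun x => by ring
  -- the Bethe equation is equivalent to G c = 0
  have hbethe : ((∑ i, l i / (c - t i)) = ∑ s ∈ Finset.univ.erase j, 2 / (c - w s)) ↔
      G c = 0 := by
    have h1 : (∑ i, l i / (c - t i)) = 2 * ∑ i, l i / (2 * (c - t i)) := by
      rw [Finset.mul_sum]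
      refine Finset.sum_congr rfl fun i _ => ?_
      have := sub_ne_zero.2 (htj i)
      field_simp
    have h2 : (∑ s ∈ Finset.univ.erase j, 2 / (c - w s)) =
        2 * ∑ s ∈ Finset.univ.erase j, 1 / (c - w s) := by
      rw [Finset.mul_sum]
      refine Finset.sum_congr rfl fun s _ => ?_
      ring
    rw [h1, h2, hGdef]
    simp only [sub_eq_zero]
    constructor
    · intro h; exact mul_left_cancel₀ two_ne_zero h
    · intro h; rw [h]
  refine ⟨ha, hb, ?_⟩
  constructor
  · intro h0
    have huniq : (0 : ℂ) = -2 * G c := tendsto_nhds_unique h0 hb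
    rw [hbethe]
    have : (-2 : ℂ) * G c = 0 := huniq.symm
    rcases mul_eq_zero.1 this with h | h
    · norm_num at h
    · exact h
  · intro hB
    have hG0 : G c = 0 := hbethe.1 hB
    have : (-2 : ℂ) * G c = 0 := by rw [hG0]; ring
    rw [← this]
    exact hb
end

section
/- Let t₀, …, t_m be distinct complex numbers, λ₀, …, λ_m ∈ ℂ, and w ∈ ℂ with w ≠ t_i for all i and satisfying the Bethe Ansatz equation Σ_{k=0}^m λ_k/(w - t_k) = 0. Let G_i = Σ_{j ≠ i} (1/(t_i - t_j)) · ( -(y_i - y_j)²∂_i∂_j + (y_i - y_j)(λ_i∂_j - λ_j∂_i) + λ_iλ_j/2 ) be the Gaudin operators on ℂ[y₀, …, y_m], and let φ ∈ ℂ[y₀, …, y_m] be the linear polynomial φ = Σ_{k=0}^m λ_k y_k/(w - t_k). Then for every i, G_i φ = μ_i φ, where μ_i = Σ_{j ≠ i} λ_iλ_j/(2(t_i - t_j)) + λ_i/(w - t_i). -/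
open MvPolynomial

/-- Bethe Ansatz for `n = 1`: if `w` satisfies `Σ_k λ_k/(w-t_k) = 0`, then the
Bethe vector `φ = Σ_k λ_k y_k/(w-t_k)` is a joint eigenvector of the Gaudin
Hamiltonians with eigenvalues `μ_i = Σ_{j≠i} λ_iλ_j/(2(t_i-t_j)) + λ_i/(w-t_i)`. -/
theorem stmt_16 (m : ℕ) (t : Fin (m+1) → ℂ) (ht : Function.Injective t)
    (l : Fin (m+1) → ℂ) (w : ℂ) (hw : ∀ i, w ≠ t i)
    (hBAE : ∑ k, l k / (w - t k) = 0)
    (φ : MvPolynomial (Fin (m+1)) ℂ)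
    (hφ : φ = ∑ k, C (l k / (w - t k)) * X k) :
    ∀ i, gaudinOp m t l i φ =
      C ((∑ j ∈ Finset.univ.erase i, l i * l j / (2 * (t i - t j)))
        + l i / (w - t i)) * φ := by
  intro i
  have hwt : ∀ k, w - t k ≠ 0 := fun k => sub_ne_zero.mpr (hw k)
  subst hφ
  set c : Fin (m+1) → ℂ := fun k => l k / (w - t k) with hc
  have hcc : ∀ k, l k / (w - t k) = c k := fun k => rfl
  simp only [hcc] at hBAE ⊢
  have hder : ∀ j : Fin (m+1), pderiv j (∑ k, C (c k) * X k) = C (c j) := by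
    intro j
    rw [map_sum]
    rw [Finset.sum_eq_single j]
    · simp
    · intro k _ hk
      classical
      simp [pderiv_X_of_ne hk]
    · simp
  have hsumc : ∑ j ∈ Finset.univ.erase i, c j = -c i := by
    rw [Finset.sum_erase_eq_sub (Finset.mem_univ i), hBAE]
    ring
  unfold gaudinOp
  have step : ∀ j ∈ Finset.univ.erase i,
      C ((t i - t j)⁻¹) *
        ( -((X i - X j) ^ 2 * pderiv i (pderiv j (∑ k, C (c k) * X k)))
          + (X i - X j) * (C (l i) * pderiv j (∑ k, C (c k) * X k)
              - C (l j) * pderiv i (∑ k, C (c k) * X k))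
          + C (l i * l j / 2) * (∑ k, C (c k) * X k) )
      = C (-(c i * c j)) * (X i - X j)
        + C (l i * l j / (2 * (t i - t j))) * (∑ k, C (c k) * X k) := by
    intro j hj
    have hji : j ≠ i := (Finset.mem_erase.mp hj).1
    have hij : t i - t j ≠ 0 := sub_ne_zero.mpr fun h => hji (ht h).symm
    rw [hder, hder, pderiv_C]
    have h1 : ((t i - t j)⁻¹ : ℂ) * (l i * c j - l j * c i) = -(c i * c j) := by
      simp only [hc]
      field_simp [hwt i, hwt j]
      ring
    have h2 : ((t i - t j)⁻¹ : ℂ) * (l i * l j / 2) = l i * l j / (2 * (t i - t j)) := by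
      rw [inv_mul_eq_div, div_div]
    have h1C : C ((t i - t j)⁻¹) * (C (l i) * C (c j) - C (l j) * C (c i))
        = (C (-(c i * c j)) : MvPolynomial (Fin (m+1)) ℂ) := by
      rw [← C_mul, ← C_mul, ← C_sub, ← C_mul, h1]
    have h2C : C ((t i - t j)⁻¹) * C (l i * l j / 2)
        = (C (l i * l j / (2 * (t i - t j))) : MvPolynomial (Fin (m+1)) ℂ) := by
      rw [← C_mul, h2]
    linear_combination (X i - X j) * h1C + (∑ k, C (c k) * X k) * h2C
  rw [Finset.sum_congr rfl step, Finset.sum_add_distrib, ← Finset.sum_mul, ← map_sum]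
  have hfirst : ∑ j ∈ Finset.univ.erase i, C (-(c i * c j)) * (X i - X j)
      = C (c i) * (∑ k, C (c k) * X k) := by
    have e1 : ∑ j ∈ Finset.univ.erase i, C (-(c i * c j)) * (X i - X j)
        = C (c i) * (∑ j ∈ Finset.univ.erase i, C (c j) * X j)
          - C (c i) * C (∑ j ∈ Finset.univ.erase i, c j) * X i := by
      rw [map_sum, Finset.mul_sum, Finset.mul_sum, Finset.sum_mul, ← Finset.sum_sub_distrib]
      refine Finset.sum_congr rfl fun j _ => ?_
      simp only [map_neg, map_mul]
      ring
    rw [e1, hsumc, Finset.sum_erase_eq_sub (Finset.mem_univ i), map_neg]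
    ring
  rw [hfirst, map_add]
  ring
end
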